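/- For λ, θ₁, θ₂, θ₃ ∈ [0,1] with θ₁, θ₂, θ₃ < 1: (1/4)(G(θ₁,θ₂,θ₃) + G(θ₁,-θ₂,θ₃) + G(θ₁,θ₂,-θ₃) + G(θ₁,-θ₂,-θ₃)) ≤ λ(θ₁·arctanh(θ₁) + θ₂·arctanh(θ₂) + θ₃·arctanh(θ₃)), where G(a,b,c) := (a+b+c+abc)·arctanh( λ(a+b+c+abc) / (1 + λ(ab+bc+ca)) ). -/

import Mathlib

noncomputable def arctanh (x : ℝ) : ℝ := (1/2) * Real.log ((1+x)/(1-x))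

noncomputable def G (l a b c : ℝ) : ℝ :=
  (a + b + c + a*b*c) * arctanh (l*(a + b + c + a*b*c) / (1 + l*(a*b + b*c + c*a)))

/-!
Put `P = (1+a)(1+b)(1+c)` and `M = (1-a)(1-b)(1-c)`. Then `a + b + c + abc = (P - M)/2`,
`arctanh a + arctanh b + arctanh c = (log P - log M)/2` and
`G l a b c = (P - M)/4 * (log (1 - l + l P) - log (1 - l + l M))`, so each `G` is at most
`l (a + b + c + abc) (arctanh a + arctanh b + arctanh c)` as soon as `(P - M)(ψ P - ψ M) ≤ 0`, where
`ψ x = log (1 - l + l x) - l log x` is the Jensen gap of `log`; averaging over the four sign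
patterns cancels the cross terms. The gap `ψ` decreases on `(0, 1]` and increases on `[1, ∞)`, and
AM-GM gives `P ≤ (1 + σ)^3`, `M ≤ (1 - σ)^3` for `σ = (a + b + c)/3`, which reduces everything to
`ψ ((1 + σ)^3) ≤ ψ ((1 - σ)^3)`. As a function of `l` the difference of these two gaps is convex,
then concave, vanishes at `l = 0` and `l = 1`, and starts with nonnegative slope because
`2σ + 2σ^3/3 ≤ log (1 + σ) - log (1 - σ)`.
-/

open Real Set

lemma one_sub_add_mul_pos {t x : ℝ} (ht0 : 0 ≤ t) (ht1 : t ≤ 1) (hx : 0 < x) :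
    0 < 1 - t + t * x := by
  nlinarith [mul_nonneg ht0 hx.le]

lemma mul_mul_le_avg_pow_three {u v w : ℝ} (hu : 0 ≤ u) (hv : 0 ≤ v) (hw : 0 ≤ w) :
    u * v * w ≤ ((u + v + w) / 3) ^ 3 := by
  nlinarith [mul_nonneg hu (sq_nonneg (v - w)), mul_nonneg hv (sq_nonneg (w - u)),
    mul_nonneg hw (sq_nonneg (u - v)), mul_nonneg (add_nonneg (add_nonneg hu hv) hw)
      (sq_nonneg (u + v + w))]

lemma two_mul_add_le_log_sub_log {x : ℝ} (h0 : 0 ≤ x) (h1 : x < 1) :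
    2 * x + 2 / 3 * x ^ 3 ≤ log (1 + x) - log (1 - x) := by
  have hsum := Real.hasSum_log_sub_log_of_abs_lt_one (abs_lt.2 ⟨by linarith, h1⟩)
  have := sum_le_hasSum (Finset.range 2) (fun k _ => by positivity) hsum
  norm_num [Finset.sum_range_succ] at this
  linarith

lemma nonneg_of_convex_then_concave {g g' g'' : ℝ → ℝ} {a b r : ℝ}
    (hg : ∀ t ∈ Icc a b, HasDerivAt g (g' t) t)
    (hg' : ∀ t ∈ Icc a b, HasDerivAt g' (g'' t) t)
    (ha : 0 ≤ g a) (hb : 0 ≤ g b) (hg'a : 0 ≤ g' a)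
    (hconvex : ∀ t ∈ Icc a b, t ≤ r → 0 ≤ g'' t)
    (hconcave : ∀ t ∈ Icc a b, r ≤ t → g'' t ≤ 0) :
    ∀ t ∈ Icc a b, 0 ≤ g t := by
  have hsub : ∀ {c d}, a ≤ c → d ≤ b → ∀ t ∈ interior (Icc c d), t ∈ Icc a b := by
    intro c d hac hdb t ht
    rw [interior_Icc] at ht
    exact ⟨hac.trans ht.1.le, ht.2.le.trans hdb⟩
  have convex_part : ∀ t ∈ Icc a b, t ≤ r → 0 ≤ g t := by
    intro t ht htr
    have hg'_mono : MonotoneOn g' (Icc a t) :=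
      monotoneOn_of_hasDerivWithinAt_nonneg (convex_Icc a t)
        (fun s hs => (hg' s ⟨hs.1, hs.2.trans ht.2⟩).continuousAt.continuousWithinAt)
        (fun s hs => (hg' s (hsub le_rfl ht.2 s hs)).hasDerivWithinAt)
        (fun s hs => hconvex s (hsub le_rfl ht.2 s hs) ((interior_subset hs).2.trans htr))
    have hg_mono : MonotoneOn g (Icc a t) :=
      monotoneOn_of_hasDerivWithinAt_nonneg (convex_Icc a t)
        (fun s hs => (hg s ⟨hs.1, hs.2.trans ht.2⟩).continuousAt.continuousWithinAt)
        (fun s hs => (hg s (hsub le_rfl ht.2 s hs)).hasDerivWithinAt)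
        (fun s hs => hg'a.trans <| hg'_mono (left_mem_Icc.2 ht.1) (interior_subset hs)
          (interior_subset hs).1)
    exact ha.trans (hg_mono (left_mem_Icc.2 ht.1) (right_mem_Icc.2 ht.1) ht.1)
  have concave_part : ∀ c ∈ Icc a b, r ≤ c → 0 ≤ g c → ∀ t ∈ Icc c b, 0 ≤ g t := by
    intro c hc hrc hgc t ht
    have hconc : ConcaveOn ℝ (Icc c b) g :=
      concaveOn_of_hasDerivWithinAt2_nonpos (convex_Icc c b)
        (fun s hs => (hg s ⟨hc.1.trans hs.1, hs.2⟩).continuousAt.continuousWithinAt)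
        (fun s hs => (hg s (hsub hc.1 le_rfl s hs)).hasDerivWithinAt)
        (fun s hs => (hg' s (hsub hc.1 le_rfl s hs)).hasDerivWithinAt)
        (fun s hs => hconcave s (hsub hc.1 le_rfl s hs) (hrc.trans (interior_subset hs).1))
    exact le_min hgc hb |>.trans <|
      hconc.min_le_of_mem_Icc (left_mem_Icc.2 hc.2) (right_mem_Icc.2 hc.2) ht
  intro t ht
  rcases le_total t r with htr | hrt
  · exact convex_part t ht htr
  rcases le_total r a with hra | har
  · exact concave_part a (left_mem_Icc.2 (ht.1.trans ht.2)) hra ha t ht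
  · have hr : r ∈ Icc a b := ⟨har, hrt.trans ht.2⟩
    exact concave_part r hr le_rfl (convex_part r hr le_rfl) t ⟨hrt, ht.2⟩


noncomputable def logJensenGap (l x : ℝ) : ℝ := log (1 - l + l * x) - l * log x

lemma hasDerivAt_logJensenGap {l x : ℝ} (hl0 : 0 ≤ l) (hl1 : l ≤ 1) (hx : 0 < x) :
    HasDerivAt (logJensenGap l) (l / (1 - l + l * x) - l / x) x := by
  have hA := one_sub_add_mul_pos hl0 hl1 hx
  have h : HasDerivAt (fun y => 1 - l + l * y) l x := by
    simpa using ((hasDerivAt_id x).const_mul l).const_add (1 - l)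
  exact ((h.log hA.ne').sub ((hasDerivAt_log hx.ne').const_mul l)).congr_deriv (by ring)

lemma logJensenGap_antitoneOn {l : ℝ} (hl0 : 0 ≤ l) (hl1 : l ≤ 1) :
    AntitoneOn (logJensenGap l) (Ioc 0 1) := by
  refine antitoneOn_of_hasDerivWithinAt_nonpos (convex_Ioc 0 1)
    (fun x hx => (hasDerivAt_logJensenGap hl0 hl1 hx.1).continuousAt.continuousWithinAt)
    (fun x hx => (hasDerivAt_logJensenGap hl0 hl1 (interior_subset hx).1).hasDerivWithinAt)
    fun x hx => ?_
  rw [interior_Ioc] at hx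
  have hxA : x ≤ 1 - l + l * x := by
    nlinarith [mul_nonneg (sub_nonneg.2 hl1) (sub_nonneg.2 hx.2.le)]
  exact sub_nonpos.2 (div_le_div_of_nonneg_left hl0 hx.1 hxA)

lemma logJensenGap_monotoneOn {l : ℝ} (hl0 : 0 ≤ l) (hl1 : l ≤ 1) :
    MonotoneOn (logJensenGap l) (Ici 1) := by
  refine monotoneOn_of_hasDerivWithinAt_nonneg (convex_Ici 1)
    (fun x hx => (hasDerivAt_logJensenGap hl0 hl1
      (one_pos.trans_le hx)).continuousAt.continuousWithinAt)
    (fun x hx => (hasDerivAt_logJensenGap hl0 hl1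
      (one_pos.trans_le (interior_subset hx))).hasDerivWithinAt)
    fun x hx => ?_
  rw [interior_Ici] at hx
  have hA := one_sub_add_mul_pos hl0 hl1 (one_pos.trans hx)
  have hAx : 1 - l + l * x ≤ x := by
    nlinarith [mul_nonneg (sub_nonneg.2 hl1) (sub_nonneg.2 hx.le)]
  exact sub_nonneg.2 (div_le_div_of_nonneg_left hl0 hA hAx)

lemma hasDerivAt_one_sub_add_mul (x t : ℝ) : HasDerivAt (fun s => 1 - s + s * x) (x - 1) t :=
  (((hasDerivAt_id' t).const_sub 1).add ((hasDerivAt_id' t).mul_const x)).congr_deriv (by ring)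

lemma hasDerivAt_log_one_sub_add_mul {x t : ℝ} (h : 0 < 1 - t + t * x) :
    HasDerivAt (fun s => log (1 - s + s * x)) ((x - 1) / (1 - t + t * x)) t :=
  (hasDerivAt_one_sub_add_mul x t).log h.ne'

lemma hasDerivAt_div_one_sub_add_mul {x t : ℝ} (h : 0 < 1 - t + t * x) :
    HasDerivAt (fun s => (x - 1) / (1 - s + s * x)) (-((x - 1) / (1 - t + t * x)) ^ 2) t :=
  ((hasDerivAt_const t (x - 1)).div (hasDerivAt_one_sub_add_mul x t) h.ne').congr_deriv
    (by field_simp; ring)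

lemma logJensenGap_le_of_log_sub_log {l P M : ℝ} (hl0 : 0 ≤ l) (hl1 : l ≤ 1) (hM0 : 0 < M)
    (hM1 : M < 1) (hP1 : 1 < P) (hPM : P - M ≤ log P - log M) :
    logJensenGap l P ≤ logJensenGap l M := by
  set C := log P - log M
  have hA : ∀ t ∈ Icc (0 : ℝ) 1, 0 < 1 - t + t * P := fun t ht =>
    one_sub_add_mul_pos ht.1 ht.2 (by linarith)
  have hB : ∀ t ∈ Icc (0 : ℝ) 1, 0 < 1 - t + t * M := fun t ht =>
    one_sub_add_mul_pos ht.1 ht.2 hM0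
  -- `g l = logJensenGap l M - logJensenGap l P`, `g 0 = g 1 = 0`, `g' 0 = C - (P - M) ≥ 0`, and
  -- `g''` has the sign of `(P + M - 2) - 2 (P - 1)(1 - M) t`.
  let g t := t * C - log (1 - t + t * P) + log (1 - t + t * M)
  let g' t := C - (P - 1) / (1 - t + t * P) + (M - 1) / (1 - t + t * M)
  let g'' t := ((P - 1) / (1 - t + t * P)) ^ 2 - ((1 - M) / (1 - t + t * M)) ^ 2
  have hg : ∀ t ∈ Icc (0 : ℝ) 1, HasDerivAt g (g' t) t := fun t ht =>
    (((hasDerivAt_id' t).mul_const C).sub (hasDerivAt_log_one_sub_add_mul (hA t ht))).add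
      (hasDerivAt_log_one_sub_add_mul (hB t ht)) |>.congr_deriv (by ring)
  have hg' : ∀ t ∈ Icc (0 : ℝ) 1, HasDerivAt g' (g'' t) t := fun t ht =>
    (((hasDerivAt_const t C).sub (hasDerivAt_div_one_sub_add_mul (hA t ht))).add
      (hasDerivAt_div_one_sub_add_mul (hB t ht))).congr_deriv (by ring)
  have hk : 0 < 2 * (P - 1) * (1 - M) := by nlinarith
  have hcross : ∀ t, (P - 1) * (1 - t + t * M) - (1 - M) * (1 - t + t * P) =
      (P + M - 2) - t * (2 * (P - 1) * (1 - M)) := fun t => by ring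
  have hg_nonneg := nonneg_of_convex_then_concave (r := (P + M - 2) / (2 * (P - 1) * (1 - M)))
    hg hg' (by simp [g]) (by simp [g, C]) (by simp only [g']; norm_num; linarith)
    (fun t ht htr => by
      rw [le_div_iff₀ hk] at htr
      have : (1 - M) / (1 - t + t * M) ≤ (P - 1) / (1 - t + t * P) := by
        rw [div_le_div_iff₀ (hB t ht) (hA t ht)]; linarith [hcross t]
      simp only [g'', sub_nonneg]
      exact pow_le_pow_left₀ (div_nonneg (by linarith) (hB t ht).le) this 2)
    (fun t ht hrt => by
      rw [div_le_iff₀ hk] at hrt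
      have : (P - 1) / (1 - t + t * P) ≤ (1 - M) / (1 - t + t * M) := by
        rw [div_le_div_iff₀ (hA t ht) (hB t ht)]; linarith [hcross t]
      simp only [g'', sub_nonpos]
      exact pow_le_pow_left₀ (div_nonneg (by linarith) (hA t ht).le) this 2)
    l ⟨hl0, hl1⟩
  simp only [logJensenGap, g, C] at hg_nonneg ⊢
  linarith

lemma logJensenGap_one_add_pow_three_le {l σ : ℝ} (hl0 : 0 ≤ l) (hl1 : l ≤ 1) (hσ0 : 0 < σ)
    (hσ1 : σ < 1) : logJensenGap l ((1 + σ) ^ 3) ≤ logJensenGap l ((1 - σ) ^ 3) := by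
  refine logJensenGap_le_of_log_sub_log hl0 hl1 (by positivity)
    (pow_lt_one₀ (by linarith) (by linarith) (by norm_num))
    (one_lt_pow₀ (by linarith) (by norm_num)) ?_
  rw [log_pow, log_pow]
  push_cast
  nlinarith [two_mul_add_le_log_sub_log hσ0.le hσ1]

lemma logJensenGap_le_of_le_pow_three {l P M σ : ℝ} (hl0 : 0 ≤ l) (hl1 : l ≤ 1) (hM : 0 < M)
    (hMP : M ≤ P) (hPσ : P ≤ (1 + σ) ^ 3) (hMσ : M ≤ (1 - σ) ^ 3) :
    logJensenGap l P ≤ logJensenGap l M := by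
  have hσ1 : 0 < 1 - σ := (Odd.pow_pos_iff (by decide)).1 (hM.trans_le hMσ)
  rcases le_or_gt P 1 with hP1 | hP1
  · exact logJensenGap_antitoneOn hl0 hl1 ⟨hM, hMP.trans hP1⟩ ⟨hM.trans_le hMP, hP1⟩ hMP
  have hσ0 : 0 < σ := by
    by_contra! hσ
    have h1σ : 0 < 1 + σ := (Odd.pow_pos_iff (by decide)).1 (one_pos.trans (hP1.trans_le hPσ))
    have := pow_le_one₀ h1σ.le (by linarith : 1 + σ ≤ 1) (n := 3)
    linarith
  have hMσ1 : (1 - σ) ^ 3 ≤ 1 := pow_le_one₀ (by linarith) (by linarith)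
  calc logJensenGap l P ≤ logJensenGap l ((1 + σ) ^ 3) :=
        logJensenGap_monotoneOn hl0 hl1 hP1.le (hP1.le.trans hPσ) hPσ
    _ ≤ logJensenGap l ((1 - σ) ^ 3) := logJensenGap_one_add_pow_three_le hl0 hl1 hσ0 (by linarith)
    _ ≤ logJensenGap l M :=
        logJensenGap_antitoneOn hl0 hl1 ⟨hM, hMσ.trans hMσ1⟩ ⟨hM.trans_le hMσ, hMσ1⟩ hMσ

lemma sub_mul_logJensenGap_sub_nonpos {l P M σ : ℝ} (hl0 : 0 ≤ l) (hl1 : l ≤ 1) (hP : 0 < P)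
    (hM : 0 < M) (hPσ : P ≤ (1 + σ) ^ 3) (hMσ : M ≤ (1 - σ) ^ 3) :
    (P - M) * (logJensenGap l P - logJensenGap l M) ≤ 0 := by
  rcases le_total M P with hMP | hPM
  · exact mul_nonpos_of_nonneg_of_nonpos (sub_nonneg.2 hMP)
      (sub_nonpos.2 (logJensenGap_le_of_le_pow_three hl0 hl1 hM hMP hPσ hMσ))
  · have := logJensenGap_le_of_le_pow_three (σ := -σ) hl0 hl1 hP hPM
      (by rwa [← sub_eq_add_neg]) (by rwa [sub_neg_eq_add])
    exact mul_nonpos_of_nonpos_of_nonneg (sub_nonpos.2 hPM) (sub_nonneg.2 this)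

lemma arctanh_neg (x : ℝ) : arctanh (-x) = -arctanh x := by
  have h : (1 + -x) / (1 - -x) = ((1 + x) / (1 - x))⁻¹ := by rw [inv_div]; ring
  rw [arctanh, arctanh, h, log_inv]
  ring

lemma arctanh_div_eq_log_sub_log {u v : ℝ} (hpos : 0 < v + u) (hneg : 0 < v - u) :
    arctanh (u / v) = (log (v + u) - log (v - u)) / 2 := by
  have hv : v ≠ 0 := by linarith
  have h : (1 + u / v) / (1 - u / v) = (v + u) / (v - u) := by field_simp
  rw [arctanh, h, log_div hpos.ne' hneg.ne']
  ring

lemma arctanh_eq_log_sub_log {x : ℝ} (hx : x ∈ Ioo (-1) 1) :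
    arctanh x = (log (1 + x) - log (1 - x)) / 2 := by
  simpa using
    arctanh_div_eq_log_sub_log (u := x) (v := 1) (by linarith [hx.1]) (by linarith [hx.2])

lemma G_eq {l a b c : ℝ} (hP : 0 < 1 - l + l * ((1 + a) * (1 + b) * (1 + c)))
    (hM : 0 < 1 - l + l * ((1 - a) * (1 - b) * (1 - c))) :
    G l a b c = ((1 + a) * (1 + b) * (1 + c) - (1 - a) * (1 - b) * (1 - c)) / 4 *
      (log (1 - l + l * ((1 + a) * (1 + b) * (1 + c))) -
        log (1 - l + l * ((1 - a) * (1 - b) * (1 - c)))) := by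
  rw [G, arctanh_div_eq_log_sub_log (by linarith) (by linarith)]
  ring_nf

lemma arctanh_add_arctanh_add_arctanh {a b c : ℝ} (ha : a ∈ Ioo (-1) 1) (hb : b ∈ Ioo (-1) 1)
    (hc : c ∈ Ioo (-1) 1) :
    arctanh a + arctanh b + arctanh c =
      (log ((1 + a) * (1 + b) * (1 + c)) - log ((1 - a) * (1 - b) * (1 - c))) / 2 := by
  obtain ⟨ha0, ha1⟩ := ha
  obtain ⟨hb0, hb1⟩ := hb
  obtain ⟨hc0, hc1⟩ := hc
  rw [arctanh_eq_log_sub_log ⟨ha0, ha1⟩, arctanh_eq_log_sub_log ⟨hb0, hb1⟩,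
    arctanh_eq_log_sub_log ⟨hc0, hc1⟩,
    log_mul (by nlinarith) (by linarith), log_mul (by linarith) (by linarith),
    log_mul (by nlinarith) (by linarith), log_mul (by linarith) (by linarith)]
  ring

lemma G_le {l a b c : ℝ} (hl0 : 0 ≤ l) (hl1 : l ≤ 1) (ha : a ∈ Ioo (-1) 1)
    (hb : b ∈ Ioo (-1) 1) (hc : c ∈ Ioo (-1) 1) :
    G l a b c ≤ l * ((a + b + c + a * b * c) * (arctanh a + arctanh b + arctanh c)) := by
  have hpos : ∀ x ∈ Ioo (-1 : ℝ) 1, 0 < 1 + x ∧ 0 < 1 - x := fun x hx =>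
    ⟨by linarith [hx.1], by linarith [hx.2]⟩
  obtain ⟨ha0, ha1⟩ := hpos a ha
  obtain ⟨hb0, hb1⟩ := hpos b hb
  obtain ⟨hc0, hc1⟩ := hpos c hc
  have hP : 0 < (1 + a) * (1 + b) * (1 + c) := by positivity
  have hM : 0 < (1 - a) * (1 - b) * (1 - c) := by positivity
  have hPσ := (mul_mul_le_avg_pow_three ha0.le hb0.le hc0.le).trans_eq
    (by ring : _ = (1 + (a + b + c) / 3) ^ 3)
  have hMσ := (mul_mul_le_avg_pow_three ha1.le hb1.le hc1.le).trans_eq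
    (by ring : _ = (1 - (a + b + c) / 3) ^ 3)
  have key := sub_mul_logJensenGap_sub_nonpos hl0 hl1 hP hM hPσ hMσ
  rw [G_eq (one_sub_add_mul_pos hl0 hl1 hP) (one_sub_add_mul_pos hl0 hl1 hM),
    arctanh_add_arctanh_add_arctanh ha hb hc]
  unfold logJensenGap at key
  linear_combination key / 4

theorem stmt_8 (l t1 t2 t3 : ℝ) (hl : l ∈ Set.Icc (0:ℝ) 1)
    (h1 : t1 ∈ Set.Icc (0:ℝ) 1) (h2 : t2 ∈ Set.Icc (0:ℝ) 1) (h3 : t3 ∈ Set.Icc (0:ℝ) 1)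
    (h1' : t1 < 1) (h2' : t2 < 1) (h3' : t3 < 1) :
    (1/4) * (G l t1 t2 t3 + G l t1 (-t2) t3 + G l t1 t2 (-t3) + G l t1 (-t2) (-t3))
      ≤ l * (t1 * arctanh t1 + t2 * arctanh t2 + t3 * arctanh t3) := by
  have mem : ∀ t ∈ Icc (0 : ℝ) 1, t < 1 → t ∈ Ioo (-1) 1 ∧ -t ∈ Ioo (-1) 1 :=
    fun t ht ht' => ⟨⟨by linarith [ht.1], ht'⟩, ⟨by linarith, by linarith [ht.1]⟩⟩
  obtain ⟨m1, -⟩ := mem t1 h1 h1'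
  obtain ⟨m2, n2⟩ := mem t2 h2 h2'
  obtain ⟨m3, n3⟩ := mem t3 h3 h3'
  have h₁ := G_le hl.1 hl.2 m1 m2 m3
  have h₂ := G_le hl.1 hl.2 m1 n2 m3
  have h₃ := G_le hl.1 hl.2 m1 m2 n3
  have h₄ := G_le hl.1 hl.2 m1 n2 n3
  rw [arctanh_neg] at h₂ h₃ h₄
  rw [arctanh_neg] at h₄
  linear_combination (h₁ + h₂ + h₃ + h₄) / 4
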